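/- arXiv:1110.5435 — 3 statements merged into one kernel-verified Lean document; each statement's English description precedes it below -/
import Mathlib

section
/- If F ⊆ ℕ is a C-set and n ∈ ℕ, then both nF = {n·k : k ∈ F} and n⁻¹F = {k ∈ ℕ : n·k ∈ F} are C-sets. -/
open Finset

/-- `F ⊆ ℕ₊` is a J-set: for every `m ∈ ℕ` and every sequence `s : ℕ₊ → ℤ^m`
there exist `r ∈ ℕ₊` and a nonempty finite `α ⊆ ℕ₊` such that
`r + s_α i ∈ F` for every `i ∈ {1,…,m}`, where `s_α = ∑_{n∈α} s n`. -/
def IsJSet (F : Set ℕ+) : Prop :=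
  ∀ (m : ℕ) (s : ℕ+ → Fin m → ℤ),
    ∃ (r : ℕ+) (α : Finset ℕ+), α.Nonempty ∧
      ∀ i : Fin m, ∃ k ∈ F, ((k : ℕ) : ℤ) = ((r : ℕ) : ℤ) + ∑ n ∈ α, s n i

/-- An ultrafilter `p` on `ℕ₊` is idempotent: `p + p = p`, where
`A ∈ p + q ↔ {n | {m | n + m ∈ A} ∈ q} ∈ p`. -/
def IsIdempotentUF (p : Ultrafilter ℕ+) : Prop :=
  ∀ A : Set ℕ+, ({n : ℕ+ | {m : ℕ+ | n + m ∈ A} ∈ p} ∈ p ↔ A ∈ p)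

/-- `F ⊆ ℕ₊` is a C-set: there is an idempotent ultrafilter `p` on `ℕ₊` such that
`F ∈ p` and every member of `p` is a J-set. -/
def IsCSet (F : Set ℕ+) : Prop :=
  ∃ p : Ultrafilter ℕ+, IsIdempotentUF p ∧ (∀ A ∈ p, IsJSet A) ∧ F ∈ p

/-!
Multiplication by `n` is an injective additive map `ℕ+ → ℕ+`, so an idempotent ultrafilter `p`
witnessing that `F` is a C-set can be pushed forward to an idempotent ultrafilter containing `nF`
and pulled back to one containing `n⁻¹F`. The pullback is an ultrafilter because `nℕ+ ∈ p`: the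
image of `p` in the finite group `ℤ/n` is an idempotent principal ultrafilter, hence the one at `0`.
Members of the new ultrafilters are J-sets: if `n⁻¹A` is a J-set, so is `A`, by grouping a given
sequence into consecutive blocks whose sums are divisible by `n` (pigeonhole on partial sums
modulo `n`); if `nA` is a J-set, so is `A`, by scaling a given sequence by `n`.
-/

open Function

section UltrafilterSum

attribute [local instance] Ultrafilter.add

theorem isIdempotentUF_iff_add_self {p : Ultrafilter ℕ+} : IsIdempotentUF p ↔ p + p = p :=
  ⟨fun hp => Ultrafilter.ext hp, fun hp A => Iff.of_eq (congrArg (A ∈ ·) hp)⟩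

theorem Ultrafilter.map_add_map {M N : Type*} [Add M] [Add N] (f : M →ₙ+ N)
    (U V : Ultrafilter M) : U.map f + V.map f = (U + V).map f :=
  Ultrafilter.coe_injective <| Filter.ext' fun P => by
    simp only [Ultrafilter.eventually_add, Ultrafilter.coe_map, Filter.eventually_map, map_add]

theorem Ultrafilter.map_add_self {M N : Type*} [Add M] [Add N] (f : M →ₙ+ N)
    {U : Ultrafilter M} (hU : U + U = U) : U.map f + U.map f = U.map f := by
  rw [Ultrafilter.map_add_map, hU]

theorem Ultrafilter.comap_add_self {M N : Type*} [Add M] [Add N] (f : M →ₙ+ N)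
    (hf : Injective f) {U : Ultrafilter N} (hrange : Set.range f ∈ U) (hU : U + U = U) :
    U.comap hf hrange + U.comap hf hrange = U.comap hf hrange := by
  have hmap : (U.comap hf hrange).map f = U :=
    Ultrafilter.coe_injective (Filter.map_comap_of_mem hrange)
  have hmap_inj : Injective (Ultrafilter.map (f : M → N)) := fun V W h => by
    have := congrArg (fun X : Ultrafilter N => Filter.comap f (X : Filter N)) h
    simpa only [Ultrafilter.coe_map, Filter.comap_map hf, Ultrafilter.coe_inj] using this
  apply hmap_inj
  rw [← Ultrafilter.map_add_map, hmap, hU]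

theorem Ultrafilter.preimage_zero_mem_of_add_self {M G : Type*} [Add M] [AddLeftCancelMonoid G]
    [Finite G] (f : M →ₙ+ G) {U : Ultrafilter M} (hU : U + U = U) : f ⁻¹' {0} ∈ U := by
  obtain ⟨a, ha⟩ := (U.map f).eq_pure_of_finite
  have hmem : {a} ∈ U.map f + U.map f := by
    rw [Ultrafilter.map_add_self f hU, ha]; rfl
  rw [ha] at hmem
  have ha0 : a = 0 := add_eq_left.mp hmem
  rw [← ha0, ← Ultrafilter.mem_map, ha]
  rfl

def PNat.mulLeftAddHom (n : ℕ+) : ℕ+ →ₙ+ ℕ+ := ⟨(n * ·), mul_add n⟩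

theorem IsIdempotentUF.range_mul_mem {p : Ultrafilter ℕ+} (hp : IsIdempotentUF p) (n : ℕ+) :
    Set.range (n * ·) ∈ p := by
  have : NeZero (n : ℕ) := ⟨n.ne_zero⟩
  let castHom : ℕ+ →ₙ+ ZMod n := ⟨fun k => ((k : ℕ) : ZMod n), fun a b => by simp⟩
  refine Filter.mem_of_superset
    (Ultrafilter.preimage_zero_mem_of_add_self castHom (isIdempotentUF_iff_add_self.mp hp)) ?_
  intro k hk
  obtain ⟨c, rfl⟩ := PNat.dvd_iff.mpr ((ZMod.natCast_eq_zero_iff _ _).mp hk)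
  exact ⟨c, rfl⟩

theorem IsIdempotentUF.map_mul {p : Ultrafilter ℕ+} (hp : IsIdempotentUF p) (n : ℕ+) :
    IsIdempotentUF (p.map (n * ·)) :=
  isIdempotentUF_iff_add_self.mpr
    (Ultrafilter.map_add_self (PNat.mulLeftAddHom n) (isIdempotentUF_iff_add_self.mp hp))

theorem IsIdempotentUF.comap_mul {p : Ultrafilter ℕ+} (hp : IsIdempotentUF p) (n : ℕ+) :
    IsIdempotentUF (p.comap (mul_right_injective n) (hp.range_mul_mem n)) :=
  isIdempotentUF_iff_add_self.mpr
    (Ultrafilter.comap_add_self (PNat.mulLeftAddHom n) (mul_right_injective n) _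
      (isIdempotentUF_iff_add_self.mp hp))

end UltrafilterSum

theorem exists_strictMono_sum_range_dvd_sub {ι : Type*} [Finite ι] (n : ℕ) [NeZero n]
    (s : ℕ → ι → ℤ) : ∃ φ : ℕ → ℕ, StrictMono φ ∧ ∀ a b i,
      (n : ℤ) ∣ ∑ j ∈ range (φ b), s j i - ∑ j ∈ range (φ a), s j i := by
  let residues : ℕ → ι → ZMod n := fun N i => ((∑ j ∈ range N, s j i : ℤ) : ZMod n)
  obtain ⟨v, hv⟩ := Finite.exists_infinite_fiber residues
  obtain ⟨φ, hφ, hφv⟩ := Filter.extraction_of_frequently_atTop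
    (Nat.frequently_atTop_iff_infinite.mpr (Set.infinite_coe_iff.mp hv))
  refine ⟨φ, hφ, fun a b i => ?_⟩
  rw [← ZMod.intCast_zmod_eq_zero_iff_dvd, Int.cast_sub]
  exact sub_eq_zero.mpr ((congrFun (hφv b) i).trans (congrFun (hφv a) i).symm)

theorem exists_pairwise_disjoint_blocks_dvd_sum {ι : Type*} [Finite ι] (n : ℕ) [NeZero n]
    (s : ℕ+ → ι → ℤ) : ∃ β : ℕ+ → Finset ℕ+, Pairwise (Disjoint on β) ∧
      (∀ k, (β k).Nonempty) ∧ ∀ k i, (n : ℤ) ∣ ∑ j ∈ β k, s j i := by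
  obtain ⟨φ, hφ, hdvd⟩ := exists_strictMono_sum_range_dvd_sub n (fun j => s j.succPNat)
  let block : ℕ → Finset ℕ := fun k => Ico (φ k) (φ (k + 1))
  have hdisj : Pairwise (Disjoint on block) := fun a b hab => by
    rw [onFun, ← disjoint_coe, coe_Ico, coe_Ico]
    exact hφ.monotone.pairwise_disjoint_on_Ico_succ hab
  refine ⟨fun k => (block k.natPred).map ⟨Nat.succPNat, Nat.succPNat_injective⟩, ?_, ?_, ?_⟩
  · exact fun a b hab =>
      (disjoint_map _).mpr ((hdisj.comp_of_injective PNat.natPred_injective) hab)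
  · exact fun k => (nonempty_Ico.mpr (hφ (Nat.lt_succ_self _))).map
  · intro k i
    rw [sum_map]
    convert hdvd k.natPred (k.natPred + 1) i using 1
    exact sum_Ico_eq_sub _ (hφ.monotone (Nat.le_succ _))

theorem IsJSet.of_preimage_mul {A : Set ℕ+} (n : ℕ+) (h : IsJSet ((n * ·) ⁻¹' A)) :
    IsJSet A := by
  classical
  intro m s
  have : NeZero (n : ℕ) := ⟨n.ne_zero⟩
  obtain ⟨β, hdisj, hne, hdvd⟩ := exists_pairwise_disjoint_blocks_dvd_sum (n : ℕ) s
  choose t ht using hdvd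
  obtain ⟨r, α, hα, hr⟩ := h m t
  refine ⟨n * r, α.biUnion β, hα.biUnion fun k _ => hne k, fun i => ?_⟩
  obtain ⟨k, hk, hkr⟩ := hr i
  refine ⟨n * k, hk, ?_⟩
  rw [sum_biUnion (hdisj.set_pairwise _)]
  simp only [ht, ← mul_sum, PNat.mul_coe, Nat.cast_mul, hkr]
  ring

theorem IsJSet.of_image_mul {A : Set ℕ+} (n : ℕ+) (h : IsJSet ((n * ·) '' A)) : IsJSet A := by
  intro m s
  -- The extra zero coordinate puts `r` itself in `nA`, so `r = n * c`.
  obtain ⟨r, α, hα, hr⟩ := h (m + 1) fun k => Fin.cons 0 fun i => (n : ℤ) * s k i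
  obtain ⟨_, ⟨c, -, rfl⟩, hc⟩ := hr 0
  refine ⟨c, α, hα, fun i => ?_⟩
  obtain ⟨_, ⟨k, hk, rfl⟩, hk'⟩ := hr i.succ
  refine ⟨k, hk, mul_left_cancel₀ (Int.natCast_ne_zero.mpr n.ne_zero) ?_⟩
  simp only [Fin.cons_zero, Fin.cons_succ, sum_const_zero, add_zero, ← mul_sum, PNat.mul_coe,
    Nat.cast_mul] at hc hk'
  rw [hk', ← hc, mul_add]

/-- If `F ⊆ ℕ₊` is a C-set and `n ∈ ℕ₊`, then both `nF = {n * k : k ∈ F}` and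
`n⁻¹F = {k : n * k ∈ F}` are C-sets. -/
theorem cset_mul_and_div (F : Set ℕ+) (hF : IsCSet F) (n : ℕ+) :
    IsCSet {m : ℕ+ | ∃ k ∈ F, m = n * k} ∧ IsCSet {k : ℕ+ | n * k ∈ F} := by
  obtain ⟨p, hp, hJ, hFp⟩ := hF
  have hrange := hp.range_mul_mem n
  constructor
  · refine ⟨p.map (n * ·), hp.map_mul n, fun A hA => IsJSet.of_preimage_mul n (hJ _ hA), ?_⟩
    exact Ultrafilter.mem_map.mpr (Filter.mem_of_superset hFp fun k hk => ⟨k, hk, rfl⟩)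
  · refine ⟨p.comap (mul_right_injective n) hrange, hp.comap_mul n,
      fun A hA => IsJSet.of_image_mul n (hJ _ ((Ultrafilter.mem_comap _ _ _).mp hA)), ?_⟩
    have hnF : (n * ·) '' {k | n * k ∈ F} = F ∩ Set.range (n * ·) :=
      Set.image_preimage_eq_inter_range
    rw [Ultrafilter.mem_comap, hnF]
    exact Filter.inter_mem hFp hrange
end

section
/- Let (X,T) be an invertible dynamical system with X a compact metric space. Then (X,T) satisfies the multiple IP-recurrence property if and only if for every m ∈ ℕ, every sequence s : ℕ → ℤ^m, and every nonempty open subset U of X, there exist a point x ∈ U and a homomorphism φ : 𝒫_f(ℕ) → 𝒫_f(ℕ) such that for each i ∈ {1,…,m}, T^{s_{φ(α)}(i)} x → x as a 𝒫_f(ℕ)-sequence, i.e., for every neighborhood V of x there exists k ∈ ℕ such that T^{s_{φ(α)}(i)} x ∈ V whenever α ∈ 𝒫_f(ℕ) satisfies min α > k. -/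
open Finset

/-- A homomorphism `φ : 𝒫_f(ℕ₊) → 𝒫_f(ℕ₊)`: it maps nonempty finite sets to nonempty
finite sets, disjoint sets to disjoint sets, and commutes with unions. -/
def IsPfHom (φ : Finset ℕ+ → Finset ℕ+) : Prop :=
  (∀ α : Finset ℕ+, α.Nonempty → (φ α).Nonempty) ∧
  (∀ α β : Finset ℕ+, α.Nonempty → β.Nonempty → Disjoint α β → Disjoint (φ α) (φ β)) ∧
  (∀ α β : Finset ℕ+, α.Nonempty → β.Nonempty → φ (α ∪ β) = φ α ∪ φ β)

/-- An invertible system `(X, T)` satisfies the multiple IP-recurrence property: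
for every `m ∈ ℕ`, every sequence `s : ℕ₊ → ℤ^m` and every nonempty open `U ⊆ X`
there exists a nonempty finite `α` with `⋂ i, T^(-s_α i) U ≠ ∅`. -/
def MultipleIPRecurrence {X : Type*} [TopologicalSpace X] (T : X ≃ₜ X) : Prop :=
  ∀ (m : ℕ) (s : ℕ+ → Fin m → ℤ) (U : Set X), IsOpen U → U.Nonempty →
    ∃ α : Finset ℕ+, α.Nonempty ∧
      (⋂ i : Fin m, (fun z => (T.toEquiv ^ (∑ n ∈ α, s n i)) z) ⁻¹' U).Nonempty


/-!
For the forward direction, apply multiple IP-recurrence repeatedly to build nonempty open sets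
`U = V₀ ⊇ V₁ ⊇ ⋯` with `closure V_{n+1} ⊆ V_n` and `diam V_{n+1} → 0`, together with finite
blocks `B₀ < B₁ < ⋯` of indices such that every `T^{s_{B_n}(i)}` maps `V_{n+1}` into `V_n`.
By compactness the `V_n` have a common point `x`, and `φ(α) = ⋃_{j ∈ α} B_j` works: composing
the maps along `α` from its largest element down to its smallest one `j` sends `x` into `V_j`,
whose diameter is small. The converse is immediate: a single `α` far enough out brings `x`
back into `U` along every coordinate.
-/

open Function

lemma Homeomorph.continuous_toEquiv_zpow {X : Type*} [TopologicalSpace X] (T : X ≃ₜ X) (k : ℤ) :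
    Continuous (T.toEquiv ^ k) := by
  let toPerm : (X ≃ₜ X) →* Equiv.Perm X :=
    { toFun := Homeomorph.toEquiv, map_one' := rfl, map_mul' := fun _ _ => rfl }
  rw [show T.toEquiv ^ k = (T ^ k).toEquiv from (map_zpow toPerm T k).symm]
  exact (T ^ k).continuous

theorem Equiv.Perm.mapsTo_zpow_sum {X ι : Type*} [LinearOrder ι] (σ : Equiv.Perm X)
    (c : ι → ℤ) {V : ι → Set X} (hV : Antitone V)
    (hmaps : ∀ j k, j < k → Set.MapsTo (σ ^ c j) (V k) (V j))
    (β : Finset ι) {t u : ι} (htu : t ≤ u) (hβ : ∀ j ∈ β, t ≤ j ∧ j < u) :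
    Set.MapsTo (σ ^ ∑ j ∈ β, c j) (V u) (V t) := by
  classical
  induction β using Finset.induction_on_max generalizing u with
  | empty =>
    rw [sum_empty, zpow_zero, Equiv.Perm.coe_one]
    exact Set.mapsTo_id _ |>.mono_right (hV htu)
  | insert M β hlt ih =>
    rw [sum_insert fun h => lt_irrefl M (hlt M h), add_comm, zpow_add, Equiv.Perm.coe_mul]
    have hM := hβ M (mem_insert_self M β)
    exact (ih hM.1 fun j hj => ⟨(hβ j (mem_insert_of_mem hj)).1, hlt j hj⟩).comp (hmaps M u hM.2)

theorem pairwise_disjoint_of_forall_lt_succ {α : Type*} [Preorder α] {B : ℕ → Finset α}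
    (hne : ∀ n, (B n).Nonempty) (hlt : ∀ n, ∀ a ∈ B n, ∀ b ∈ B (n + 1), a < b) :
    Pairwise (Disjoint on B) := by
  have hlt' : ∀ j k, j < k → ∀ a ∈ B j, ∀ b ∈ B k, a < b := by
    intro j k hjk
    induction k, hjk using Nat.le_induction with
    | base => exact hlt j
    | succ k _ ih =>
      intro a ha b hb
      obtain ⟨c, hc⟩ := hne k
      exact (ih a ha c hc).trans (hlt k c hc b hb)
  intro j k hjk
  rcases hjk.lt_or_gt with h | h
  · exact disjoint_left.2 fun a ha ha' => lt_irrefl a (hlt' j k h a ha a ha')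
  · exact disjoint_right.2 fun a ha ha' => lt_irrefl a (hlt' k j h a ha a ha')

theorem isPfHom_biUnion {B : ℕ+ → Finset ℕ+} (hne : ∀ j, (B j).Nonempty)
    (hdisj : Pairwise (Disjoint on B)) : IsPfHom fun β => β.biUnion B := by
  refine ⟨fun β ⟨j, hj⟩ => (hne j).mono (subset_biUnion_of_mem B hj), ?_,
    fun β γ _ _ => union_biUnion⟩
  intro β γ _ _ hβγ
  simp only [disjoint_biUnion_left, disjoint_biUnion_right]
  intro j hj k hk
  exact hdisj (by rintro rfl; exact disjoint_left.1 hβγ hk hj)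

theorem exists_seq_of_forall_exists {α : Type*} {P : α → Prop} {R : ℕ → α → α → Prop} {a : α}
    (ha : P a) (h : ∀ n a, P a → ∃ b, P b ∧ R n a b) :
    ∃ f : ℕ → α, f 0 = a ∧ ∀ n, P (f n) ∧ R n (f n) (f (n + 1)) := by
  choose! next hnextP hnextR using h
  let f : ℕ → α := fun n => Nat.rec a next n
  have hf : ∀ n, P (f n) := by
    intro n
    induction n with
    | zero => exact ha
    | succ n ih => exact hnextP n _ ih
  exact ⟨f, rfl, fun n => ⟨hf n, hnextR n _ (hf n)⟩⟩

theorem exists_isOpen_mem_closure_subset_diam_le {X : Type*} [PseudoMetricSpace X] {Z : Set X}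
    {z : X} (hZ : Z ∈ nhds z) {ε : ℝ} (hε : 0 < ε) :
    ∃ W, IsOpen W ∧ z ∈ W ∧ closure W ⊆ Z ∧ Metric.diam W ≤ ε := by
  obtain ⟨r, hr, hrZ⟩ := Metric.nhds_basis_closedBall.mem_iff.1 hZ
  have hρ : 0 < min r (ε / 2) := lt_min hr (half_pos hε)
  refine ⟨Metric.ball z (min r (ε / 2)), Metric.isOpen_ball, Metric.mem_ball_self hρ,
    Metric.closure_ball_subset_closedBall.trans
      ((Metric.closedBall_subset_closedBall (min_le_left _ _)).trans hrZ), ?_⟩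
  calc Metric.diam (Metric.ball z (min r (ε / 2))) ≤ 2 * min r (ε / 2) := Metric.diam_ball hρ.le
    _ ≤ ε := by linarith [min_le_right r (ε / 2)]

section IPRecurrence

variable {X : Type*} {m : ℕ}

/-- `T^{s_{φ(α)}(i)} x → x` as a `𝒫_f(ℕ₊)`-sequence, for every coordinate `i`. -/
def IsIPRecurrentAlong [TopologicalSpace X] (T : X ≃ₜ X) (s : ℕ+ → Fin m → ℤ)
    (φ : Finset ℕ+ → Finset ℕ+) (x : X) : Prop :=
  ∀ i : Fin m, ∀ V : Set X, IsOpen V → x ∈ V →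
    ∃ k : ℕ+, ∀ α : Finset ℕ+, α.Nonempty → (∀ a ∈ α, k < a) →
      (T.toEquiv ^ (∑ n ∈ φ α, s n i)) x ∈ V

theorem IsIPRecurrentAlong.exists_nonempty_iInter_preimage [TopologicalSpace X] {T : X ≃ₜ X}
    {s : ℕ+ → Fin m → ℤ} {φ : Finset ℕ+ → Finset ℕ+} {x : X} (hx : IsIPRecurrentAlong T s φ x)
    (hφ : IsPfHom φ) {U : Set X} (hU : IsOpen U) (hxU : x ∈ U) :
    ∃ α : Finset ℕ+, α.Nonempty ∧
      (⋂ i : Fin m, (fun z => (T.toEquiv ^ (∑ n ∈ α, s n i)) z) ⁻¹' U).Nonempty := by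
  choose k hk using fun i => hx i U hU hxU
  let K : ℕ+ := univ.sup k + 1
  have hK : ∀ i, ∀ a ∈ ({K} : Finset ℕ+), k i < a := fun i a ha => by
    rw [mem_singleton.1 ha]
    exact (le_sup (mem_univ i)).trans_lt (PNat.lt_add_right _ 1)
  exact ⟨φ {K}, hφ.1 _ (singleton_nonempty K),
    x, Set.mem_iInter.2 fun i => hk i {K} (singleton_nonempty K) (hK i)⟩

theorem MultipleIPRecurrence.exists_forall_lt_mem [TopologicalSpace X] {T : X ≃ₜ X}
    (hT : MultipleIPRecurrence T) (s : ℕ+ → Fin m → ℤ) {U : Set X} (hU : IsOpen U)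
    (hUne : U.Nonempty) (N : ℕ+) :
    ∃ α : Finset ℕ+, α.Nonempty ∧ (∀ n ∈ α, N < n) ∧
      ∃ z ∈ U, ∀ i, (T.toEquiv ^ ∑ n ∈ α, s n i) z ∈ U := by
  -- the extra coordinate `0` keeps the recurrent point itself in `U`
  obtain ⟨α, hα, z, hz⟩ := hT (m + 1) (fun n => Fin.cons 0 (s (n + N))) U hU hUne
  simp only [Set.mem_iInter, Set.mem_preimage] at hz
  refine ⟨α.map (addRightEmbedding N), hα.map, ?_, z, by simpa using hz 0, fun i => ?_⟩
  · simpa using fun a _ => PNat.lt_add_left N a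
  · simpa [sum_map] using hz i.succ

variable [PseudoMetricSpace X]

theorem MultipleIPRecurrence.exists_block_step {T : X ≃ₜ X} (hT : MultipleIPRecurrence T)
    (s : ℕ+ → Fin m → ℤ) {V : Set X} (hV : IsOpen V) (hVne : V.Nonempty) (B : Finset ℕ+)
    {ε : ℝ} (hε : 0 < ε) :
    ∃ W : Set X, ∃ a : Finset ℕ+, IsOpen W ∧ W.Nonempty ∧ a.Nonempty ∧
      (∀ b ∈ B, ∀ c ∈ a, b < c) ∧ closure W ⊆ V ∧ Metric.diam W ≤ ε ∧
      ∀ i, Set.MapsTo (T.toEquiv ^ ∑ n ∈ a, s n i) W V := by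
  obtain ⟨a, ha, haB, z, hzV, hz⟩ := hT.exists_forall_lt_mem s hV hVne (B.sup id)
  have hZ : V ∩ ⋂ i, (T.toEquiv ^ ∑ n ∈ a, s n i) ⁻¹' V ∈ nhds z :=
    (hV.inter (isOpen_iInter_of_finite fun i => hV.preimage (T.continuous_toEquiv_zpow _))).mem_nhds
      ⟨hzV, Set.mem_iInter.2 hz⟩
  obtain ⟨W, hWo, hzW, hWZ, hWdiam⟩ := exists_isOpen_mem_closure_subset_diam_le hZ hε
  refine ⟨W, a, hWo, ⟨z, hzW⟩, ha, fun b hb c hc => (le_sup (f := id) hb).trans_lt (haB c hc),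
    hWZ.trans Set.inter_subset_left, hWdiam, fun i w hw => ?_⟩
  exact Set.mem_iInter.1 (hWZ (subset_closure hw)).2 i

structure NestedBlocks (T : X ≃ₜ X) (s : ℕ+ → Fin m → ℤ) (V : ℕ → Set X)
    (B : ℕ → Finset ℕ+) : Prop where
  nonempty (n : ℕ) : (V n).Nonempty
  nonempty_block (n : ℕ) : (B n).Nonempty
  closure_subset (n : ℕ) : closure (V (n + 1)) ⊆ V n
  diam_le (n : ℕ) : Metric.diam (V (n + 1)) ≤ 1 / (n + 1)
  block_lt (n : ℕ) : ∀ a ∈ B n, ∀ b ∈ B (n + 1), a < b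
  mapsTo (n : ℕ) (i : Fin m) : Set.MapsTo (T.toEquiv ^ ∑ k ∈ B n, s k i) (V (n + 1)) (V n)

theorem MultipleIPRecurrence.exists_nestedBlocks {T : X ≃ₜ X} (hT : MultipleIPRecurrence T)
    (s : ℕ+ → Fin m → ℤ) {U : Set X} (hU : IsOpen U) (hUne : U.Nonempty) :
    ∃ V B, V 0 = U ∧ NestedBlocks T s V B := by
  -- the state at stage `n` is `(V n, B (n - 1))`, starting from `(U, ∅)`
  obtain ⟨f, hf0, hf⟩ := exists_seq_of_forall_exists
    (P := fun p : Set X × Finset ℕ+ => IsOpen p.1 ∧ p.1.Nonempty)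
    (R := fun n p q => q.2.Nonempty ∧ (∀ b ∈ p.2, ∀ c ∈ q.2, b < c) ∧ closure q.1 ⊆ p.1 ∧
      Metric.diam q.1 ≤ 1 / (n + 1) ∧ ∀ i, Set.MapsTo (T.toEquiv ^ ∑ k ∈ q.2, s k i) q.1 p.1)
    (a := (U, ∅)) ⟨hU, hUne⟩ fun n p hp => by
      obtain ⟨W, a, hW, hWne, h⟩ := hT.exists_block_step s hp.1 hp.2 p.2 Nat.one_div_pos_of_nat
      exact ⟨(W, a), ⟨hW, hWne⟩, h⟩
  exact ⟨fun n => (f n).1, fun n => (f (n + 1)).2, congrArg Prod.fst hf0,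
    { nonempty := fun n => (hf n).1.2
      nonempty_block := fun n => (hf n).2.1
      closure_subset := fun n => (hf n).2.2.2.1
      diam_le := fun n => (hf n).2.2.2.2.1
      block_lt := fun n => (hf (n + 1)).2.2.1
      mapsTo := fun n => (hf n).2.2.2.2.2 }⟩

namespace NestedBlocks

variable {T : X ≃ₜ X} {s : ℕ+ → Fin m → ℤ} {V : ℕ → Set X} {B : ℕ → Finset ℕ+}

theorem antitone (h : NestedBlocks T s V B) : Antitone V :=
  antitone_nat_of_succ_le fun n => subset_closure.trans (h.closure_subset n)

theorem nonempty_iInter [CompactSpace X] (h : NestedBlocks T s V B) : (⋂ n, V n).Nonempty := by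
  obtain ⟨x, hx⟩ := IsCompact.nonempty_iInter_of_sequence_nonempty_isCompact_isClosed
    (fun n => closure (V n)) (fun n => closure_mono (subset_closure.trans (h.closure_subset n)))
    (fun n => (h.nonempty n).closure) isClosed_closure.isCompact fun _ => isClosed_closure
  exact ⟨x, Set.mem_iInter.2 fun n => h.closure_subset n (Set.mem_iInter.1 hx (n + 1))⟩

theorem pairwise_disjoint (h : NestedBlocks T s V B) :
    Pairwise (Disjoint on fun j : ℕ+ => B j) :=
  (pairwise_disjoint_of_forall_lt_succ h.nonempty_block h.block_lt).comp_of_injective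
    PNat.coe_injective

theorem mapsTo_zpow_sum (h : NestedBlocks T s V B) (i : Fin m) (β : Finset ℕ+) {t u : ℕ+}
    (htu : t ≤ u) (hβ : ∀ j ∈ β, t ≤ j ∧ j < u) :
    Set.MapsTo (T.toEquiv ^ ∑ j ∈ β, ∑ k ∈ B j, s k i) (V u) (V t) := by
  refine Equiv.Perm.mapsTo_zpow_sum T.toEquiv (V := fun j : ℕ+ => V j) _ (h.antitone.comp_monotone
    fun _ _ h => h) (fun j k hjk => ?_) β htu hβ
  exact (h.mapsTo j i).mono_left (h.antitone (PNat.coe_lt_coe _ _ |>.2 hjk))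

theorem exists_isIPRecurrentAlong [CompactSpace X] (h : NestedBlocks T s V B) :
    ∃ x ∈ V 0, ∃ φ, IsPfHom φ ∧ IsIPRecurrentAlong T s φ x := by
  obtain ⟨x, hx⟩ := h.nonempty_iInter
  rw [Set.mem_iInter] at hx
  refine ⟨x, hx 0, fun α => α.biUnion fun j => B j,
    isPfHom_biUnion (fun j => h.nonempty_block j) h.pairwise_disjoint, fun i W hW hxW => ?_⟩
  obtain ⟨ε, hε, hballW⟩ := Metric.isOpen_iff.1 hW x hxW
  obtain ⟨n, hn⟩ := exists_nat_one_div_lt hε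
  refine ⟨n.succPNat, fun α hα hαk => hballW ?_⟩
  rw [sum_biUnion (h.pairwise_disjoint.set_pairwise _)]
  have hu : ∀ j ∈ α, j < α.sup id + 1 :=
    fun j hj => (le_sup (f := id) hj).trans_lt (PNat.lt_add_right _ 1)
  obtain ⟨a, ha⟩ := hα
  have hmem := h.mapsTo_zpow_sum i α ((hαk a ha).trans (hu a ha)).le
    (fun j hj => ⟨(hαk j hj).le, hu j hj⟩) (hx _)
  calc dist _ x ≤ Metric.diam (V (n + 1)) :=
        Metric.dist_le_diam_of_mem Metric.isBounded_of_compactSpace hmem (hx _)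
    _ ≤ 1 / (n + 1) := h.diam_le n
    _ < ε := hn

end NestedBlocks

end IPRecurrence

theorem multiple_ip_recurrence_iff_ip_limit_general
    {X : Type*} [MetricSpace X] [CompactSpace X] (T : X ≃ₜ X) :
    MultipleIPRecurrence T ↔
      ∀ (m : ℕ) (s : ℕ+ → Fin m → ℤ) (U : Set X), IsOpen U → U.Nonempty →
        ∃ x ∈ U, ∃ φ : Finset ℕ+ → Finset ℕ+, IsPfHom φ ∧
          ∀ i : Fin m, ∀ V : Set X, IsOpen V → x ∈ V →
            ∃ k : ℕ+, ∀ α : Finset ℕ+, α.Nonempty → (∀ a ∈ α, k < a) →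
              (T.toEquiv ^ (∑ n ∈ φ α, s n i)) x ∈ V := by
  refine ⟨fun hT m s U hU hUne => ?_, fun h m s U hU hUne => ?_⟩
  · obtain ⟨V, B, rfl, hB⟩ := hT.exists_nestedBlocks s hU hUne
    exact hB.exists_isIPRecurrentAlong
  · obtain ⟨x, hxU, φ, hφ, hx : IsIPRecurrentAlong T s φ x⟩ := h m s U hU hUne
    exact hx.exists_nonempty_iInter_preimage hφ hU hxU

/-- For an invertible system on a compact metric space, the multiple IP-recurrence
property holds iff for every `m`, every sequence `s : ℕ₊ → ℤ^m` and every nonempty open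
`U` there are `x ∈ U` and a homomorphism `φ : 𝒫_f(ℕ₊) → 𝒫_f(ℕ₊)` such that for each
`i`, `T^(s_(φ α) i) x → x` as a `𝒫_f(ℕ₊)`-sequence. -/
theorem multiple_ip_recurrence_iff_ip_limit
    {X : Type*} [MetricSpace X] [CompactSpace X] [Nonempty X] (T : X ≃ₜ X) :
    MultipleIPRecurrence T ↔
      ∀ (m : ℕ) (s : ℕ+ → Fin m → ℤ) (U : Set X), IsOpen U → U.Nonempty →
        ∃ x ∈ U, ∃ φ : Finset ℕ+ → Finset ℕ+, IsPfHom φ ∧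
          ∀ i : Fin m, ∀ V : Set X, IsOpen V → x ∈ V →
            ∃ k : ℕ+, ∀ α : Finset ℕ+, α.Nonempty → (∀ a ∈ α, k < a) →
              (T.toEquiv ^ (∑ n ∈ φ α, s n i)) x ∈ V :=
  multiple_ip_recurrence_iff_ip_limit_general T
end

section
/- Let 𝓕 be a filterdual such that h(𝓕) is closed under the addition of ultrafilters, and let π : (X,T) → (Y,S) be a factor map between dynamical systems. If y ∈ Y is an 𝓕-recurrent point, then there exists an 𝓕-recurrent point x ∈ X with π(x) = y. -/
open Finset

/-- A (Furstenberg) family on `ℕ₊`: a collection of subsets closed under supersets. -/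
def IsFamily (F : Set (Set ℕ+)) : Prop :=
  ∀ ⦃A B : Set ℕ+⦄, A ⊆ B → A ∈ F → B ∈ F

/-- A filterdual: a nonempty proper family with the Ramsey property. -/
def IsFilterdual (F : Set (Set ℕ+)) : Prop :=
  IsFamily F ∧ F.Nonempty ∧ F ≠ Set.univ ∧
    ∀ A B : Set ℕ+, A ∪ B ∈ F → A ∈ F ∨ B ∈ F

/-- `p ∈ h(F)`: every member of the ultrafilter `p` belongs to the family `F`. -/
def InHull (F : Set (Set ℕ+)) (p : Ultrafilter ℕ+) : Prop :=
  ∀ A ∈ p, A ∈ F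

/-- `h(F)` is closed under the addition of ultrafilters: whenever `p, q ∈ h(F)`,
every member of `p + q` belongs to `F` (where `A ∈ p + q ↔ {n | {m | n+m ∈ A} ∈ q} ∈ p`). -/
def HullAddClosed (F : Set (Set ℕ+)) : Prop :=
  ∀ p q : Ultrafilter ℕ+, InHull F p → InHull F q →
    ∀ A : Set ℕ+, {n : ℕ+ | {m : ℕ+ | n + m ∈ A} ∈ q} ∈ p → A ∈ F

/-- `A` is an essential `F`-set: some idempotent ultrafilter `p ∈ h(F)` has `A ∈ p`. -/
def IsEssentialSet (F : Set (Set ℕ+)) (A : Set ℕ+) : Prop :=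
  ∃ p : Ultrafilter ℕ+, IsIdempotentUF p ∧ InHull F p ∧ A ∈ p

/-- `x` is an `F`-recurrent point of the system `(X, T)`:
`N(x, U) = {n ∈ ℕ₊ | T^n x ∈ U} ∈ F` for every open neighborhood `U` of `x`. -/
def FRecurrent (F : Set (Set ℕ+)) {X : Type*} [TopologicalSpace X] (T : X → X) (x : X) : Prop :=
  ∀ U : Set X, IsOpen U → x ∈ U → {n : ℕ+ | T^[(n : ℕ)] x ∈ U} ∈ F

/-!
A point `y` is `F`-recurrent as soon as the orbit of `y` converges back to `y` along some
ultrafilter of `h(F)`. Conversely, for an `F`-recurrent `y` the ultrafilters of `h(F)` along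
which the orbit of `y` converges to `y` form a nonempty closed subsemigroup of `βℕ₊`, so by
Ellis–Numakura one of them is an idempotent `p`. Lifting `y` to any `x₀` and letting `x` be the
`p`-limit of the orbit of `x₀`, we get `π x = y`, and `p + p = p` forces the `p`-limit of the
orbit of `x` to be `x` itself.
-/

open Filter Topology

attribute [local instance] Ultrafilter.add Ultrafilter.addSemigroup

theorem Ultrafilter.isClosed_setOf_coe_le {α : Type*} (G : Filter α) :
    IsClosed {p : Ultrafilter α | ↑p ≤ G} := by
  have : {p : Ultrafilter α | ↑p ≤ G} = ⋂ A ∈ G, {p | A ∈ p} := by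
    ext p
    simp [Filter.le_def]
  rw [this]
  exact isClosed_biInter fun A _ => ultrafilter_isClosed_basic A

namespace IsFilterdual

variable {F : Set (Set ℕ+)}

/-- The Ramsey property of `F` is exactly closure of `{A | Aᶜ ∉ F}` under `∩`; the hull `h(F)`
consists of the ultrafilters finer than this filter. -/
def dualFilter (hF : IsFilterdual F) : Filter ℕ+ where
  sets := {A | Aᶜ ∉ F}
  univ_sets := by
    obtain ⟨hmono, -, hne, -⟩ := hF
    refine fun hempty => hne (Set.eq_univ_of_forall fun A => ?_)
    exact hmono (by simp) hempty
  sets_of_superset := fun hA hAB hB => hA (hF.1 (Set.compl_subset_compl.mpr hAB) hB)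
  inter_sets := fun hA hB hAB => by
    rw [Set.compl_inter] at hAB
    exact (hF.2.2.2 _ _ hAB).elim hA hB

theorem mem_dualFilter (hF : IsFilterdual F) {A : Set ℕ+} : A ∈ hF.dualFilter ↔ Aᶜ ∉ F :=
  Iff.rfl

theorem inHull_iff_le (hF : IsFilterdual F) (p : Ultrafilter ℕ+) :
    InHull F p ↔ ↑p ≤ hF.dualFilter := by
  refine ⟨fun hp A hA => ?_, fun hp A hA => ?_⟩
  · by_contra hAp
    exact hF.mem_dualFilter.mp hA (hp _ (Ultrafilter.compl_mem_iff_notMem.mpr hAp))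
  · by_contra hAF
    exact Ultrafilter.compl_mem_iff_notMem.mp (hp (hF.mem_dualFilter.mpr (by rwa [compl_compl]))) hA

theorem isClosed_setOf_inHull (hF : IsFilterdual F) :
    IsClosed {p : Ultrafilter ℕ+ | InHull F p} := by
  simpa only [hF.inHull_iff_le] using Ultrafilter.isClosed_setOf_coe_le hF.dualFilter

theorem exists_inHull_le (hF : IsFilterdual F) {G : Filter ℕ+} (hG : ∀ A ∈ G, A ∈ F) :
    ∃ p : Ultrafilter ℕ+, InHull F p ∧ ↑p ≤ G := by
  have : (hF.dualFilter ⊓ G).NeBot := by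
    refine Filter.inf_neBot_iff.mpr fun A hA B hB => Set.nonempty_iff_ne_empty.mpr fun hAB => ?_
    exact hF.mem_dualFilter.mp hA
      (hF.1 (Set.disjoint_iff_inter_eq_empty.mpr hAB).subset_compl_left (hG B hB))
  obtain ⟨p, hp⟩ := Ultrafilter.exists_le (hF.dualFilter ⊓ G)
  exact ⟨p, (hF.inHull_iff_le p).mpr (hp.trans inf_le_left), hp.trans inf_le_right⟩

end IsFilterdual

theorem HullAddClosed.inHull_add {F : Set (Set ℕ+)} (hadd : HullAddClosed F)
    {p q : Ultrafilter ℕ+} (hp : InHull F p) (hq : InHull F q) : InHull F (p + q) :=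
  fun A hA => hadd p q hp hq A hA

section Orbit

variable {X : Type*} [TopologicalSpace X] {T : X → X}

/-- The `q`-limit is the inner one: `∀ᶠ k in p + q, P k ↔ ∀ᶠ n in p, ∀ᶠ m in q, P (n + m)`. -/
theorem tendsto_iterate_add (hT : Continuous T) {p q : Ultrafilter ℕ+} {x y z : X}
    (hq : Tendsto (fun m : ℕ+ => T^[m] x) q (𝓝 y))
    (hp : Tendsto (fun n : ℕ+ => T^[n] y) p (𝓝 z)) :
    Tendsto (fun n : ℕ+ => T^[n] x) ↑(p + q) (𝓝 z) := by
  intro U hU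
  refine (Ultrafilter.eventually_add p q (fun k => T^[k] x ∈ U)).mpr ?_
  filter_upwards [hp.eventually (eventually_mem_nhds_iff.mpr hU)] with n hn
  filter_upwards [((hT.iterate n).tendsto y).comp hq hn] with m hm
  simpa [Function.iterate_add_apply] using hm

theorem tendsto_iterate_self_of_add_self [CompactSpace X] [T2Space X] (hT : Continuous T)
    {p : Ultrafilter ℕ+} (hp : p + p = p) {x₀ x : X}
    (hx : Tendsto (fun n : ℕ+ => T^[n] x₀) p (𝓝 x)) :
    Tendsto (fun n : ℕ+ => T^[n] x) p (𝓝 x) := by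
  obtain ⟨z, hz⟩ : ∃ z, Tendsto (fun n : ℕ+ => T^[n] x) p (𝓝 z) :=
    ⟨_, (p.map fun n : ℕ+ => T^[n] x).le_nhds_lim⟩
  have hx₀ := tendsto_iterate_add hT hx hz
  rw [hp] at hx₀
  rwa [tendsto_nhds_unique hx₀ hx] at hz

theorem frecurrent_of_tendsto_iterate {F : Set (Set ℕ+)} {p : Ultrafilter ℕ+} (hp : InHull F p)
    {x : X} (hx : Tendsto (fun n : ℕ+ => T^[n] x) p (𝓝 x)) : FRecurrent F T x :=
  fun _ hU hxU => hp _ (hx (hU.mem_nhds hxU))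

theorem FRecurrent.mem_of_mem_comap {F : Set (Set ℕ+)} (hF : IsFamily F) {x : X}
    (hx : FRecurrent F T x) {A : Set ℕ+} (hA : A ∈ comap (fun n : ℕ+ => T^[n] x) (𝓝 x)) :
    A ∈ F := by
  obtain ⟨V, hV, hVA⟩ := hA
  obtain ⟨U, hUV, hU, hxU⟩ := mem_nhds_iff.mp hV
  exact hF (fun n hn => hVA (hUV hn)) (hx U hU hxU)

theorem FRecurrent.exists_add_self_inHull_tendsto {F : Set (Set ℕ+)} (hF : IsFilterdual F)
    (hadd : HullAddClosed F) (hT : Continuous T) {x : X} (hx : FRecurrent F T x) :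
    ∃ p : Ultrafilter ℕ+, p + p = p ∧ InHull F p ∧
      Tendsto (fun n : ℕ+ => T^[n] x) p (𝓝 x) := by
  set C := {p : Ultrafilter ℕ+ | InHull F p ∧ Tendsto (fun n : ℕ+ => T^[n] x) p (𝓝 x)}
  have hC_closed : IsClosed C := by
    rw [show C = _ ∩ _ from Set.ext fun p => and_congr_right' tendsto_iff_comap]
    exact hF.isClosed_setOf_inHull.inter
      (Ultrafilter.isClosed_setOf_coe_le (comap (fun n : ℕ+ => T^[n] x) (𝓝 x)))
  have hC_nonempty : C.Nonempty := by
    obtain ⟨p, hpF, hp⟩ := hF.exists_inHull_le fun A hA => hx.mem_of_mem_comap hF.1 hA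
    exact ⟨p, hpF, tendsto_iff_comap.mpr hp⟩
  have hC_add : ∀ p ∈ C, ∀ q ∈ C, p + q ∈ C :=
    fun p hp q hq => ⟨hadd.inHull_add hp.1 hq.1, tendsto_iterate_add hT hq.2 hp.2⟩
  obtain ⟨p, ⟨hpF, hpx⟩, hpp⟩ := exists_idempotent_in_compact_add_subsemigroup
    Ultrafilter.continuous_add_left C hC_nonempty hC_closed.isCompact hC_add
  exact ⟨p, hpp, hpF, hpx⟩

end Orbit

theorem frecurrent_lifts_general (F : Set (Set ℕ+))
    (hfd : IsFilterdual F) (hadd : HullAddClosed F)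
    {X Y : Type*} [TopologicalSpace X] [CompactSpace X] [T2Space X]
    [TopologicalSpace Y] [T2Space Y]
    (T : X → X) (S : Y → Y) (hT : Continuous T) (hS : Continuous S)
    (π : X → Y) (hπc : Continuous π) (hπs : Function.Surjective π)
    (hfac : ∀ z : X, π (T z) = S (π z))
    (y : Y) (hy : FRecurrent F S y) :
    ∃ x : X, π x = y ∧ FRecurrent F T x := by
  obtain ⟨p, hpp, hpF, hpy⟩ := hy.exists_add_self_inHull_tendsto hfd hadd hS
  obtain ⟨x₀, rfl⟩ := hπs y
  set x := (p.map fun n : ℕ+ => T^[n] x₀).lim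
  have hx : Tendsto (fun n : ℕ+ => T^[n] x₀) p (𝓝 x) := Ultrafilter.le_nhds_lim _
  have hπx : π x = π x₀ := by
    have hsemiconj : Function.Semiconj π T S := hfac
    refine tendsto_nhds_unique ((hπc.tendsto x).comp hx) (hpy.congr fun n => ?_)
    exact (hsemiconj.iterate_right n x₀).symm
  exact ⟨x, hπx,
    frecurrent_of_tendsto_iterate hpF (tendsto_iterate_self_of_add_self hT hpp hx)⟩

/-- For a filterdual `F` whose hull is closed under addition of ultrafilters, and a
factor map `π : (X, T) → (Y, S)`: every `F`-recurrent point `y ∈ Y` lifts to an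
`F`-recurrent point `x ∈ π⁻¹(y)`. -/
theorem frecurrent_lifts (F : Set (Set ℕ+))
    (hfd : IsFilterdual F) (hadd : HullAddClosed F)
    {X Y : Type*} [TopologicalSpace X] [CompactSpace X] [T2Space X] [Nonempty X]
    [TopologicalSpace Y] [CompactSpace Y] [T2Space Y] [Nonempty Y]
    (T : X → X) (S : Y → Y) (hT : Continuous T) (hS : Continuous S)
    (π : X → Y) (hπc : Continuous π) (hπs : Function.Surjective π)
    (hfac : ∀ z : X, π (T z) = S (π z))
    (y : Y) (hy : FRecurrent F S y) :
    ∃ x : X, π x = y ∧ FRecurrent F T x :=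
  frecurrent_lifts_general F hfd hadd T S hT hS π hπc hπs hfac y hy
end
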